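/- arXiv:1206.4285 — 3 statements merged into one kernel-verified Lean document; each statement's English description precedes it below -/
import Mathlib

section
/- Let (ξ_i) be i.i.d. N(0,1) and α ∈ (0,1/2). Set U(α) = -(α + log(1-2α)/2)/α and S_k = Σ_{i=1}^k (ξ_i² - 1) - U(α)·k, S_0 = 0. Then for every x > 0, P(sup_{k≥1} S_k > x) ≤ exp(-α x), and consequently E[sup_{k≥1} S_k]⁺ ≤ 1/α, i.e., E max_{k≥1} { Σ_{i=1}^k (ξ_i² - 1) - U(α)k } ≤ 1/α. -/
/-!
Since `E exp (α ξ²) = (1 - 2α)^(-1/2)`, the drift `U(α)` (`gaussSqDrift α`) is exactly the one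
for which `exp (α S_k) = ∏_{i<k} exp (α (ξ_i² - 1 - U(α)))` (with `S_k = driftedSqSum α ξ k`) is a
product of independent mean-one factors, hence a nonnegative martingale. Doob's maximal inequality
then bounds `P(sup_k S_k > x) = P(sup_k exp (α S_k) > exp (α x))` by `exp (-α x)`, and integrating
this tail bound gives `E sup_k S_k ≤ ∫_0^∞ exp (-α t) dt = 1/α`.
-/

open MeasureTheory ProbabilityTheory Real Finset
open scoped NNReal

section Martingale

variable {Ω : Type*} {m0 : MeasurableSpace Ω} {μ : Measure Ω}

theorem MeasureTheory.Martingale.mul_measureReal_exists_le_le [IsFiniteMeasure μ]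
    {𝒢 : Filtration ℕ m0} {f : ℕ → Ω → ℝ} (hf : Martingale f 𝒢 μ) (hnonneg : 0 ≤ f) {ε : ℝ}
    (hε : 0 ≤ ε) :
    ε * μ.real {ω | ∃ n, ε ≤ f n ω} ≤ μ[f 0] := by
  lift ε to ℝ≥0 using hε
  set A : ℕ → Set Ω := fun n ↦
    {ω | (ε : ℝ) ≤ (range (n + 1)).sup' nonempty_range_add_one fun k ↦ f k ω}
  have hA : {ω | ∃ n, (ε : ℝ) ≤ f n ω} = ⋃ n, A n := by
    ext ω
    simp only [A, Set.mem_ofPred_eq, Set.mem_iUnion, le_sup'_iff, mem_range, Nat.lt_succ_iff]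
    exact ⟨fun ⟨n, hn⟩ ↦ ⟨n, n, le_rfl, hn⟩, fun ⟨_, k, _, hk⟩ ↦ ⟨k, hk⟩⟩
  have hA_mono : Monotone A := by
    intro m n hmn ω (hω : (ε : ℝ) ≤ _)
    exact hω.trans (sup'_mono _ (range_subset_range.mpr (by omega)) _)
  have hA_le : ∀ n, ε * μ (A n) ≤ ENNReal.ofReal (μ[f 0]) := fun n ↦ calc
    ε * μ (A n) ≤ ENNReal.ofReal (∫ ω in A n, f n ω ∂μ) := maximal_ineq hf.submartingale hnonneg n
    _ ≤ ENNReal.ofReal (μ[f n]) := ENNReal.ofReal_le_ofReal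
      (setIntegral_le_integral (hf.integrable n) (ae_of_all _ (hnonneg n)))
    _ = ENNReal.ofReal (μ[f 0]) := by
      rw [← setIntegral_univ, ← hf.setIntegral_eq (Nat.zero_le n) MeasurableSet.univ,
        setIntegral_univ]
  have h : ε * μ {ω | ∃ n, (ε : ℝ) ≤ f n ω} ≤ ENNReal.ofReal (μ[f 0]) := by
    rw [hA, hA_mono.measure_iUnion, ENNReal.mul_iSup]
    exact iSup_le hA_le
  have := ENNReal.toReal_mono ENNReal.ofReal_ne_top h
  rwa [ENNReal.toReal_mul, ENNReal.toReal_ofReal (integral_nonneg (hnonneg 0))] at this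

variable {Y : ℕ → Ω → ℝ} (hY : ∀ i, StronglyMeasurable (Y i))
include hY

theorem ProbabilityTheory.iIndepFun.indep_natural_comap_succ (hind : iIndepFun Y μ) (n : ℕ) :
    Indep (Filtration.natural Y hY n)
      (MeasurableSpace.comap (Y (n + 1)) Real.measurableSpace) μ := by
  have h := indep_iSup_of_disjoint (fun i ↦ (hY i).measurable.comap_le)
    ((iIndepFun_iff_iIndep _ _ _).mp hind) (S := Set.Iic n) (T := {n + 1})
    (Set.disjoint_singleton_right.mpr (by simp))
  simpa [Filtration.natural] using h

theorem ProbabilityTheory.iIndepFun.martingale_prod_range_succ [IsFiniteMeasure μ]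
    (hind : iIndepFun Y μ) (hint : ∀ i, Integrable (Y i) μ) (hmean : ∀ i, μ[Y i] = 1) :
    Martingale (fun n ω ↦ ∏ i ∈ range (n + 1), Y i ω) (Filtration.natural Y hY) μ := by
  set 𝒢 := Filtration.natural Y hY
  set f : ℕ → Ω → ℝ := fun n ω ↦ ∏ i ∈ range (n + 1), Y i ω
  have hf_succ : ∀ n, f (n + 1) = f n * Y (n + 1) := fun n ↦ by
    ext ω; exact prod_range_succ _ _
  have hadapted : StronglyAdapted 𝒢 f := fun n ↦
    Finset.stronglyMeasurable_fun_prod _ fun i hi ↦ (Filtration.stronglyAdapted_natural hY i).mono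
      (𝒢.mono (Nat.lt_succ_iff.mp (mem_range.mp hi)))
  have hindep : ∀ n, f n ⟂ᵢ[μ] Y (n + 1) := fun n ↦ (IndepFun_iff_Indep _ _ _).mpr
    (indep_of_indep_of_le_left (hind.indep_natural_comap_succ hY n)
      (hadapted n).measurable.comap_le)
  have hf_int : ∀ n, Integrable (f n) μ := by
    intro n
    induction n with
    | zero => simpa [f] using hint 0
    | succ n ih => rw [hf_succ]; exact (hindep n).integrable_mul ih (hint _)
  refine martingale_nat hadapted hf_int fun n ↦ ?_
  have hcond : μ[Y (n + 1) | 𝒢 n] =ᵐ[μ] fun _ ↦ 1 := by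
    rw [← hmean (n + 1)]
    exact condExp_indep_eq (hY _).measurable.comap_le (𝒢.le n)
      (comap_measurable _).stronglyMeasurable (hind.indep_natural_comap_succ hY n).symm
  rw [hf_succ]
  filter_upwards [condExp_mul_of_stronglyMeasurable_left (hadapted n)
    ((hf_succ n) ▸ hf_int (n + 1)) (hint _), hcond] with ω h1 h2
  simp [h1, h2]

end Martingale

theorem integral_exp_mul_sq_gaussianReal {v : ℝ≥0} (hv : v ≠ 0) {a : ℝ} (ha : a * v < 1 / 2) :
    ∫ x, exp (a * x ^ 2) ∂gaussianReal 0 v = (√(1 - 2 * a * v))⁻¹ := by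
  have hb : (2 * v : ℝ)⁻¹ - a = (1 - 2 * a * v) / (2 * v) := by field_simp
  have h_integrand : ∀ x : ℝ, gaussianPDFReal 0 v x • exp (a * x ^ 2)
      = (√(2 * π * v))⁻¹ * exp (-((2 * v : ℝ)⁻¹ - a) * x ^ 2) := fun x ↦ by
    rw [gaussianPDFReal, smul_eq_mul, mul_assoc, ← exp_add]
    congr 2
    field_simp
    ring
  have hne : 1 - 2 * a * v ≠ 0 := (by linarith : 0 < 1 - 2 * a * v).ne'
  rw [integral_gaussianReal_eq_integral_smul hv, funext h_integrand, integral_const_mul,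
    integral_gaussian, ← sqrt_inv, ← sqrt_inv, ← sqrt_mul (by positivity), hb]
  field_simp

noncomputable def gaussSqDrift (α : ℝ) : ℝ := -(α + log (1 - 2 * α) / 2) / α

theorem integral_exp_mul_sq_sub_one_sub_gaussSqDrift {α : ℝ} (hα : α ≠ 0) (hα2 : α < 1 / 2) :
    ∫ x, exp (α * (x ^ 2 - 1 - gaussSqDrift α)) ∂gaussianReal 0 1 = 1 := by
  have h_const : exp (-(α * (1 + gaussSqDrift α))) = √(1 - 2 * α) := by
    rw [gaussSqDrift, ← exp_log (by linarith : 0 < 1 - 2 * α), ← exp_half, exp_log (by linarith)]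
    congr 1
    field_simp
    ring
  have h_integrand : ∀ x, exp (α * (x ^ 2 - 1 - gaussSqDrift α))
      = exp (-(α * (1 + gaussSqDrift α))) * exp (α * x ^ 2) := fun x ↦ by
    rw [← exp_add]; ring_nf
  simp_rw [h_integrand]
  rw [integral_const_mul, integral_exp_mul_sq_gaussianReal one_ne_zero (by simpa using hα2),
    h_const, NNReal.coe_one, mul_one, mul_inv_cancel₀ (sqrt_pos.mpr (by linarith)).ne']

noncomputable def driftedSqSum {Ω : Type*} (α : ℝ) (ξ : ℕ → Ω → ℝ) (k : ℕ) (ω : Ω) : ℝ :=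
  ∑ i ∈ range k, (ξ i ω ^ 2 - 1) - gaussSqDrift α * k

theorem prod_range_exp_eq_exp_driftedSqSum {Ω : Type*} (α : ℝ) (ξ : ℕ → Ω → ℝ) (k : ℕ) (ω : Ω) :
    ∏ i ∈ range k, exp (α * (ξ i ω ^ 2 - 1 - gaussSqDrift α)) = exp (α * driftedSqSum α ξ k ω) := by
  rw [← exp_sum, driftedSqSum, ← mul_sum, sum_sub_distrib, sum_const, card_range, nsmul_eq_mul]
  ring_nf

section Tail

variable {Ω : Type*} [MeasurableSpace Ω] {P : Measure Ω} [IsProbabilityMeasure P]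
  {ξ : ℕ → Ω → ℝ} {α : ℝ}

theorem measureReal_lt_iSup_driftedSqSum_le_of_measurable (hmeas : ∀ i, Measurable (ξ i))
    (hindep : iIndepFun ξ P) (hdist : ∀ i, P.map (ξ i) = gaussianReal 0 1)
    (hα : 0 < α) (hα2 : α < 1 / 2) (x : ℝ) :
    P.real {ω | x < ⨆ k : ℕ+, driftedSqSum α ξ k ω} ≤ exp (-α * x) := by
  set φ : ℝ → ℝ := fun y ↦ exp (α * (y ^ 2 - 1 - gaussSqDrift α))
  have hφ : Measurable φ := by fun_prop
  have hφ_mean : ∀ i, P[φ ∘ ξ i] = 1 := fun i ↦ by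
    change ∫ ω, φ (ξ i ω) ∂P = 1
    rw [← integral_map (hmeas i).aemeasurable hφ.aestronglyMeasurable, hdist i]
    exact integral_exp_mul_sq_sub_one_sub_gaussSqDrift hα.ne' hα2
  have hM := (hindep.comp _ fun _ ↦ hφ).martingale_prod_range_succ
    (fun i ↦ (hφ.comp (hmeas i)).stronglyMeasurable)
    (fun i ↦ .of_integral_ne_zero (by rw [hφ_mean]; exact one_ne_zero)) hφ_mean
  have hsub : {ω | x < ⨆ k : ℕ+, driftedSqSum α ξ k ω}
      ⊆ {ω | ∃ n, exp (α * x) ≤ ∏ i ∈ range (n + 1), (φ ∘ ξ i) ω} := by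
    intro ω (hω : x < _)
    obtain ⟨k, hk⟩ := exists_lt_of_lt_ciSup hω
    refine ⟨k.natPred, ?_⟩
    change _ ≤ ∏ i ∈ range _, exp (α * (ξ i ω ^ 2 - 1 - gaussSqDrift α))
    rw [prod_range_exp_eq_exp_driftedSqSum, PNat.natPred_add_one, exp_le_exp]
    exact mul_le_mul_of_nonneg_left hk.le hα.le
  have hdoob : exp (α * x) * P.real {ω | ∃ n, exp (α * x) ≤ ∏ i ∈ range (n + 1), (φ ∘ ξ i) ω}
      ≤ 1 := by
    simpa only [zero_add, prod_range_one, hφ_mean 0] using hM.mul_measureReal_exists_le_le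
      (fun n ω ↦ prod_nonneg fun _ _ ↦ (exp_pos _).le) (exp_pos (α * x)).le
  calc P.real {ω | x < ⨆ k : ℕ+, driftedSqSum α ξ k ω}
      ≤ P.real {ω | ∃ n, exp (α * x) ≤ ∏ i ∈ range (n + 1), (φ ∘ ξ i) ω} := measureReal_mono hsub
    _ ≤ exp (-α * x) := by
      rw [neg_mul, exp_neg, inv_eq_one_div, le_div_iff₀' (exp_pos _)]
      exact hdoob

theorem measureReal_lt_iSup_driftedSqSum_le (hindep : iIndepFun ξ P)
    (hdist : ∀ i, P.map (ξ i) = gaussianReal 0 1) (hα : 0 < α) (hα2 : α < 1 / 2) (x : ℝ) :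
    P.real {ω | x < ⨆ k : ℕ+, driftedSqSum α ξ k ω} ≤ exp (-α * x) := by
  have hae : ∀ i, AEMeasurable (ξ i) P := fun i ↦
    .of_map_ne_zero (by rw [hdist i]; exact IsProbabilityMeasure.ne_zero _)
  set ξ' := fun i ↦ (hae i).mk (ξ i)
  have heq : ∀ i, ξ i =ᵐ[P] ξ' i := fun i ↦ (hae i).ae_eq_mk
  have hsup : (fun ω ↦ ⨆ k : ℕ+, driftedSqSum α ξ k ω)
      =ᵐ[P] fun ω ↦ ⨆ k : ℕ+, driftedSqSum α ξ' k ω := by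
    filter_upwards [ae_all_iff.mpr heq] with ω hω
    simp only [driftedSqSum, hω]
  refine (measureReal_congr (hsup.fun_comp (x < ·))).trans_le ?_
  exact measureReal_lt_iSup_driftedSqSum_le_of_measurable (fun i ↦ (hae i).measurable_mk)
    ((iIndepFun_congr heq).mp hindep) (fun i ↦ by rw [← Measure.map_congr (heq i), hdist i])
    hα hα2 x

end Tail

theorem integral_le_inv_of_measureReal_lt_le_exp {Ω : Type*} [MeasurableSpace Ω] {μ : Measure Ω}
    {X : Ω → ℝ} {α : ℝ} (hα : 0 < α)
    (htail : ∀ t, 0 < t → μ.real {ω | t < X ω} ≤ exp (-α * t)) :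
    ∫ ω, X ω ∂μ ≤ α⁻¹ := by
  by_cases hX : Integrable X μ
  swap
  · rw [integral_undef hX]; positivity
  have htail' : ∀ t ∈ Set.Ioi (0 : ℝ), μ.real {ω | t < max (X ω) 0} ≤ exp (-α * t) := by
    intro t (ht : 0 < t)
    simpa only [lt_max_iff, ht.not_gt, or_false] using htail t ht
  calc ∫ ω, X ω ∂μ ≤ ∫ ω, max (X ω) 0 ∂μ :=
        integral_mono hX hX.pos_part fun ω ↦ le_max_left _ _
    _ = ∫ t in Set.Ioi 0, μ.real {ω | t < max (X ω) 0} :=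
        hX.pos_part.integral_eq_integral_meas_lt (ae_of_all _ fun _ ↦ le_max_right _ _)
    _ ≤ ∫ t in Set.Ioi 0, exp (-α * t) :=
        integral_mono_of_nonneg (ae_of_all _ fun _ ↦ measureReal_nonneg)
          (exp_neg_integrableOn_Ioi 0 hα) ((ae_restrict_iff' measurableSet_Ioi).mpr
          (ae_of_all _ htail'))
    _ = α⁻¹ := by rw [integral_exp_mul_Ioi (by linarith) 0]; simp

theorem stmt_7 {Ω : Type*} [MeasurableSpace Ω] (P : Measure Ω) [IsProbabilityMeasure P]
    (ξ : ℕ → Ω → ℝ)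
    (hindep : iIndepFun ξ P)
    (hdist : ∀ i, Measure.map (ξ i) P = gaussianReal 0 1)
    (α : ℝ) (hα : 0 < α) (hα2 : α < 1 / 2) :
    (∀ x : ℝ, 0 < x →
      (P {ω | x < ⨆ k : ℕ+, (∑ i ∈ Finset.range (k : ℕ), ((ξ i ω) ^ 2 - 1) -
          (-(α + Real.log (1 - 2 * α) / 2) / α) * (k : ℕ))}).toReal ≤
        Real.exp (-α * x)) ∧
    ∫ ω, ⨆ k : ℕ+, (∑ i ∈ Finset.range (k : ℕ), ((ξ i ω) ^ 2 - 1) -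
        (-(α + Real.log (1 - 2 * α) / 2) / α) * (k : ℕ)) ∂P ≤ 1 / α := by
  have htail := measureReal_lt_iSup_driftedSqSum_le hindep hdist hα hα2
  exact ⟨fun x _ ↦ htail x,
    (integral_le_inv_of_measureReal_lt_le_exp hα fun t _ ↦ htail t).trans_eq (one_div α).symm⟩
end

section
/- For ρ > 0, if eρ ≤ 1 then max_{Q ≥ 1} (2 + [log Q]₊ (1 + ρe))/Q = 2, and if eρ > 1 then max_{Q ≥ 1} (2 + [log Q]₊ (1 + ρe))/Q = (1 + ρe)·exp((1 − ρe)/(1 + ρe)). -/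
/-!
Write `a = 1 + ρe`; on `Q ≥ 1` the ratio is `(2 + a log Q) / Q`. If `a ≤ 2`, then
`2 + a log Q ≤ 2 + 2 (Q - 1) = 2Q`, with equality at `Q = 1`. If `a ≥ 2`, the tangent line
of `a exp` at `t₀ = (a - 2) / a` gives `2 + a t ≤ a exp (t - t₀)`, i.e. with `t = log Q`
the bound `2 + a log Q ≤ a exp (-t₀) Q`, attained at `Q = exp t₀ ≥ 1`.
-/

open Real Set

noncomputable def logGainRatio (a Q : ℝ) : ℝ := (2 + max (log Q) 0 * a) / Q

lemma two_add_log_mul_le_two_mul {a Q : ℝ} (ha : a ≤ 2) (hQ : 1 ≤ Q) :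
    2 + log Q * a ≤ 2 * Q := by
  have hlog : 0 ≤ log Q := log_nonneg hQ
  have hlog_le : log Q ≤ Q - 1 := log_le_sub_one_of_pos (by linarith)
  nlinarith

lemma two_add_log_mul_le_mul_exp {a Q : ℝ} (ha : 0 < a) (hQ : 0 < Q) :
    2 + log Q * a ≤ a * exp ((2 - a) / a) * Q := by
  have htangent := add_one_le_exp (log Q + (2 - a) / a)
  have hshift : a * ((2 - a) / a) = 2 - a := by field_simp
  calc 2 + log Q * a = a * (log Q + (2 - a) / a + 1) := by linarith
    _ ≤ a * exp (log Q + (2 - a) / a) := by gcongr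
    _ = a * exp ((2 - a) / a) * Q := by rw [exp_add, exp_log hQ]; ring

lemma isGreatest_logGainRatio_of_le_two {a : ℝ} (ha : a ≤ 2) :
    IsGreatest (logGainRatio a '' Ici 1) 2 := by
  refine ⟨⟨1, self_mem_Ici, by simp [logGainRatio]⟩, ?_⟩
  rintro _ ⟨Q, hQ : 1 ≤ Q, rfl⟩
  rw [logGainRatio, max_eq_left (log_nonneg hQ), div_le_iff₀ (by linarith)]
  exact two_add_log_mul_le_two_mul ha hQ

lemma isGreatest_logGainRatio_of_two_le {a : ℝ} (ha : 2 ≤ a) :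
    IsGreatest (logGainRatio a '' Ici 1) (a * exp ((2 - a) / a)) := by
  have ha0 : 0 < a := by linarith
  have ht₀ : 0 ≤ (a - 2) / a := div_nonneg (by linarith) ha0.le
  refine ⟨⟨exp ((a - 2) / a), one_le_exp ht₀, ?_⟩, ?_⟩
  · have hneg : (2 - a) / a = -((a - 2) / a) := by ring
    rw [logGainRatio, log_exp, max_eq_left ht₀, hneg, exp_neg]
    field_simp
    ring
  · rintro _ ⟨Q, hQ : 1 ≤ Q, rfl⟩
    rw [logGainRatio, max_eq_left (log_nonneg hQ), div_le_iff₀ (by linarith)]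
    exact two_add_log_mul_le_mul_exp ha0 (by linarith)

theorem stmt_11_general (ρ : ℝ) :
    (Real.exp 1 * ρ ≤ 1 →
      IsGreatest ((fun Q : ℝ => (2 + max (Real.log Q) 0 * (1 + ρ * Real.exp 1)) / Q) ''
        Set.Ici 1) 2) ∧
    (1 < Real.exp 1 * ρ →
      IsGreatest ((fun Q : ℝ => (2 + max (Real.log Q) 0 * (1 + ρ * Real.exp 1)) / Q) ''
        Set.Ici 1)
        ((1 + ρ * Real.exp 1) * Real.exp ((1 - ρ * Real.exp 1) / (1 + ρ * Real.exp 1)))) := by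
  refine ⟨fun h => isGreatest_logGainRatio_of_le_two (by linarith), fun h => ?_⟩
  rw [show 1 - ρ * exp 1 = 2 - (1 + ρ * exp 1) by ring]
  exact isGreatest_logGainRatio_of_two_le (by linarith)

theorem stmt_11 (ρ : ℝ) (hρ : 0 < ρ) :
    (Real.exp 1 * ρ ≤ 1 →
      IsGreatest ((fun Q : ℝ => (2 + max (Real.log Q) 0 * (1 + ρ * Real.exp 1)) / Q) ''
        Set.Ici 1) 2) ∧
    (1 < Real.exp 1 * ρ →
      IsGreatest ((fun Q : ℝ => (2 + max (Real.log Q) 0 * (1 + ρ * Real.exp 1)) / Q) ''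
        Set.Ici 1)
        ((1 + ρ * Real.exp 1) * Real.exp ((1 - ρ * Real.exp 1) / (1 + ρ * Real.exp 1)))) :=
  stmt_11_general ρ
end

section
/- Let M be a finite set of positive integers, let r : M → ℝ, and define weights w_m = exp(−r(m)/(4σ²)) / Σ_{s∈M} exp(−r(s)/(4σ²)) for σ > 0. Then Σ_{m∈M} w_m (r(m) − min_{s∈M} r(s)) ≤ 4σ² Σ_{m∈M} w_m log(1/w_m), i.e., the weighted excess of r over its minimum is bounded by 4σ² times the entropy of the exponential weights. -/
/-!
With `Z = ∑ exp (-f i / T)` one has `log (1 / w i) = f i / T + log Z`, so the entropy of the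
Gibbs weights satisfies `T * H(w) = ∑ w i * f i + T * log Z` (the free-energy identity). Since `Z`
dominates each of its terms, `T * log Z ≥ -f j` for every `j`, and the bound follows for `f j`
the minimum.
-/

open Real Finset

section Gibbs

variable {ι : Type*} {s : Finset ι} {f w : ι → ℝ} {T : ℝ}

lemma neg_le_mul_log_sum_exp_neg_div {j : ι} (hj : j ∈ s) (hT : 0 < T) :
    -f j ≤ T * log (∑ i ∈ s, exp (-f i / T)) := by
  have hterm : exp (-f j / T) ≤ ∑ i ∈ s, exp (-f i / T) :=
    single_le_sum (f := fun i => exp (-f i / T)) (fun i _ => (exp_pos _).le) hj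
  have hlog : -f j / T ≤ log (∑ i ∈ s, exp (-f i / T)) := by
    simpa only [log_exp] using log_le_log (exp_pos _) hterm
  rw [div_le_iff₀ hT] at hlog
  linarith

lemma sum_gibbs_eq_one (hs : s.Nonempty)
    (hw : ∀ i ∈ s, w i = exp (-f i / T) / ∑ k ∈ s, exp (-f k / T)) :
    ∑ i ∈ s, w i = 1 := by
  have hZ : 0 < ∑ k ∈ s, exp (-f k / T) := sum_pos (fun k _ => exp_pos _) hs
  rw [sum_congr rfl hw, ← sum_div, div_self hZ.ne']

lemma mul_sum_gibbs_mul_log_inv (hs : s.Nonempty) (hT : T ≠ 0)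
    (hw : ∀ i ∈ s, w i = exp (-f i / T) / ∑ k ∈ s, exp (-f k / T)) :
    T * ∑ i ∈ s, w i * log (1 / w i) =
      ∑ i ∈ s, w i * f i + T * log (∑ k ∈ s, exp (-f k / T)) := by
  have hZ : 0 < ∑ k ∈ s, exp (-f k / T) := sum_pos (fun k _ => exp_pos _) hs
  have hlog : ∀ i ∈ s, log (1 / w i) = f i / T + log (∑ k ∈ s, exp (-f k / T)) := by
    intro i hi
    rw [hw i hi, one_div, log_inv, log_div (exp_pos _).ne' hZ.ne', log_exp]
    ring
  rw [sum_congr rfl fun i hi => by rw [hlog i hi]]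
  simp only [mul_add, sum_add_distrib, ← sum_mul, sum_gibbs_eq_one hs hw, one_mul, mul_sum]
  congr 1
  exact sum_congr rfl fun i _ => by field_simp

theorem sum_gibbs_mul_sub_le_mul_entropy {j : ι} (hj : j ∈ s) (hT : 0 < T)
    (hw : ∀ i ∈ s, w i = exp (-f i / T) / ∑ k ∈ s, exp (-f k / T)) :
    ∑ i ∈ s, w i * (f i - f j) ≤ T * ∑ i ∈ s, w i * log (1 / w i) := by
  have hs : s.Nonempty := ⟨j, hj⟩
  have hexcess : ∑ i ∈ s, w i * (f i - f j) = ∑ i ∈ s, w i * f i - f j := by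
    simp only [mul_sub, sum_sub_distrib, ← sum_mul, sum_gibbs_eq_one hs hw, one_mul]
  rw [hexcess, mul_sum_gibbs_mul_log_inv hs hT.ne' hw]
  linarith [neg_le_mul_log_sum_exp_neg_div (f := f) hj hT]

end Gibbs

theorem stmt_16_general (M : Finset ℕ) (hM : M.Nonempty)
    (r : ℕ → ℝ) (σ : ℝ) (hσ : 0 < σ)
    (w : ℕ → ℝ)
    (hw : ∀ m ∈ M, w m = Real.exp (-r m / (4 * σ ^ 2)) /
      ∑ s ∈ M, Real.exp (-r s / (4 * σ ^ 2))) :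
    ∑ m ∈ M, w m * (r m - M.inf' hM r) ≤
      4 * σ ^ 2 * ∑ m ∈ M, w m * Real.log (1 / w m) := by
  obtain ⟨m₀, hm₀, hmin⟩ := M.exists_mem_eq_inf' hM r
  rw [hmin]
  exact sum_gibbs_mul_sub_le_mul_entropy hm₀ (by positivity) hw

theorem stmt_16 (M : Finset ℕ) (hM : M.Nonempty) (hpos : ∀ m ∈ M, 0 < m)
    (r : ℕ → ℝ) (σ : ℝ) (hσ : 0 < σ)
    (w : ℕ → ℝ)
    (hw : ∀ m ∈ M, w m = Real.exp (-r m / (4 * σ ^ 2)) /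
      ∑ s ∈ M, Real.exp (-r s / (4 * σ ^ 2))) :
    ∑ m ∈ M, w m * (r m - M.inf' hM r) ≤
      4 * σ ^ 2 * ∑ m ∈ M, w m * Real.log (1 / w m) :=
  stmt_16_general M hM r σ hσ w hw
end
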